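/- arXiv:2205.04000 — 2 statements merged into one kernel-verified Lean document; each statement's English description precedes it below -/
import Mathlib

section
/- Let R be a commutative noetherian ring, S a left noetherian ring which is an R-algebra, and M an S-module that is finitely generated as an S-module. Then the set Ass(M) of associated primes of M is finite. -/
/-- Annihilator in `R` of an `S`-submodule, `R` acting through `algebraMap R S`. -/
def annRS (R : Type*) {S M : Type*} [CommRing R] [Ring S] [Algebra R S]
    [AddCommGroup M] [Module S M] (N : Submodule S M) : Ideal R where
  carrier := {r : R | ∀ x ∈ N, algebraMap R S r • x = 0}
  zero_mem' := by intro x _; simp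
  add_mem' := by
    intro a b ha hb x hx
    rw [map_add, add_smul, ha x hx, hb x hx, add_zero]
  smul_mem' := by
    intro c a ha x hx
    rw [smul_eq_mul, map_mul, mul_smul, ha x hx, smul_zero]

/-- An `R`-elementary object: nonzero, finitely generated, and the `R`-annihilator of
every nonzero subobject equals a fixed prime ideal `p` of `R`. -/
def IsRElem (R : Type*) {S M : Type*} [CommRing R] [Ring S] [Algebra R S]
    [AddCommGroup M] [Module S M] (L : Submodule S M) : Prop :=
  L ≠ ⊥ ∧ L.FG ∧ ∃ p : Ideal R, p.IsPrime ∧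
    ∀ L' : Submodule S M, L' ≤ L → L' ≠ ⊥ → annRS R L' = p

/-- Associated primes of the subobject `N`. -/
def RAssOf (R : Type*) {S M : Type*} [CommRing R] [Ring S] [Algebra R S]
    [AddCommGroup M] [Module S M] (N : Submodule S M) : Set (Ideal R) :=
  {p | ∃ L : Submodule S M, L ≤ N ∧ IsRElem R L ∧ annRS R L = p}

/-!
Among the submodules `N ⊆ M` whose set of associated primes is finite, pick a maximal one
(`M` is noetherian). If `N ≠ M`, the quotient `M ⧸ N` contains an `R`-elementary
submodule `L̄`: take a nonzero submodule whose `R`-annihilator is maximal among those of nonzero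
submodules (noetherian `R`); this annihilator is prime. An elementary submodule of the preimage
`N'` of `L̄` either meets `N`, and then its intersection with `N` is elementary with the same
annihilator, or embeds into `L̄`, and then its annihilator is that of `L̄`. So `N'` has finitely
many associated primes too, contradicting maximality of `N`.
-/

section

variable {R S M M' : Type*} [CommRing R] [Ring S] [Algebra R S]
  [AddCommGroup M] [Module S M] [AddCommGroup M'] [Module S M']

theorem annRS_anti {N N' : Submodule S M} (h : N ≤ N') : annRS R N' ≤ annRS R N :=
  fun _ hr x hx => hr x (h hx)

theorem annRS_ne_top {N : Submodule S M} (hN : N ≠ ⊥) : annRS R N ≠ ⊤ := by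
  intro htop
  refine hN ((Submodule.eq_bot_iff _).2 fun x hx => ?_)
  simpa using (htop ▸ Submodule.mem_top : (1 : R) ∈ annRS R N) x hx

theorem annRS_map_of_disjoint {N : Submodule S M} (f : M →ₗ[S] M')
    (h : Disjoint N (LinearMap.ker f)) : annRS R (N.map f) = annRS R N := by
  ext r
  constructor
  · intro hr x hx
    refine Submodule.disjoint_def.1 h _ (N.smul_mem _ hx) ?_
    rw [LinearMap.mem_ker, map_smul]
    exact hr _ (Submodule.mem_map_of_mem hx)
  · rintro hr _ ⟨x, hx, rfl⟩
    rw [← map_smul, hr x hx, map_zero]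

variable (R) in
def algebraMapSMulₗ (a : R) : M →ₗ[S] M where
  toFun x := algebraMap R S a • x
  map_add' := smul_add _
  map_smul' s x := by rw [RingHom.id_apply, ← mul_smul, Algebra.commutes a s, mul_smul]

theorem annRS_isPrime {L : Submodule S M} (hL : L ≠ ⊥)
    (h : ∀ L' ≤ L, L' ≠ ⊥ → annRS R L' = annRS R L) : (annRS R L).IsPrime := by
  refine ⟨annRS_ne_top hL, fun {a b} hab => or_iff_not_imp_left.2 fun ha => ?_⟩
  set aL := L.map (algebraMapSMulₗ R a)
  have haL_le : aL ≤ L := by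
    rintro _ ⟨x, hx, rfl⟩
    exact L.smul_mem _ hx
  have haL_ne : aL ≠ ⊥ := fun hbot => ha fun x hx => by
    have hax : algebraMapSMulₗ R a x ∈ aL := Submodule.mem_map_of_mem hx
    rwa [hbot, Submodule.mem_bot] at hax
  rw [← h aL haL_le haL_ne]
  rintro _ ⟨x, hx, rfl⟩
  change algebraMap R S b • algebraMap R S a • x = 0
  rw [← mul_smul, ← map_mul, mul_comm]
  exact hab x hx

theorem IsRElem.annRS_eq {L L' : Submodule S M} (hL : IsRElem R L) (hle : L' ≤ L)
    (hne : L' ≠ ⊥) : annRS R L' = annRS R L := by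
  obtain ⟨hL0, -, p, -, hp⟩ := hL
  rw [hp L' hle hne, hp L le_rfl hL0]

theorem isRElem_iff [IsNoetherian S M] {L : Submodule S M} :
    IsRElem R L ↔ L ≠ ⊥ ∧ ∀ L' ≤ L, L' ≠ ⊥ → annRS R L' = annRS R L :=
  ⟨fun hL => ⟨hL.1, fun _ => hL.annRS_eq⟩, fun ⟨hL, h⟩ =>
    ⟨hL, IsNoetherian.noetherian L, annRS R L, annRS_isPrime hL h, h⟩⟩

theorem IsRElem.of_le [IsNoetherian S M] {L L' : Submodule S M} (hL : IsRElem R L)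
    (hle : L' ≤ L) (hne : L' ≠ ⊥) : IsRElem R L' :=
  isRElem_iff.2 ⟨hne, fun L'' hle' hne' => by
    rw [hL.annRS_eq (hle'.trans hle) hne', hL.annRS_eq hle hne]⟩

theorem exists_isRElem_le [IsNoetherianRing R] [IsNoetherian S M] {N : Submodule S M}
    (hN : N ≠ ⊥) : ∃ L ≤ N, IsRElem R L := by
  obtain ⟨L, ⟨hLN, hL⟩, hmax⟩ := (InvImage.wf (annRS R) wellFounded_gt).has_min
    {L : Submodule S M | L ≤ N ∧ L ≠ ⊥} ⟨N, le_rfl, hN⟩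
  refine ⟨L, hLN, isRElem_iff.2 ⟨hL, fun L' hle hne => ?_⟩⟩
  exact ((annRS_anti hle).lt_or_eq.resolve_left (hmax L' ⟨hle.trans hLN, hne⟩)).symm

theorem rAssOf_bot : RAssOf R (⊥ : Submodule S M) = ∅ :=
  Set.eq_empty_of_forall_notMem fun _ ⟨_, hle, hL, _⟩ => hL.1 (le_bot_iff.1 hle)

theorem rAssOf_comap_mkQ_subset [IsNoetherian S M] {N : Submodule S M}
    {L : Submodule S (M ⧸ N)} (hL : IsRElem R L) :
    RAssOf R (L.comap N.mkQ) ⊆ RAssOf R N ∪ {annRS R L} := by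
  rintro _ ⟨L', hle, hL', rfl⟩
  by_cases hdisj : Disjoint L' N
  · right
    have hdisj' : Disjoint L' (LinearMap.ker N.mkQ) := by rwa [Submodule.ker_mkQ]
    have hne : L'.map N.mkQ ≠ ⊥ := fun hbot =>
      hL'.1 (disjoint_self.1 (hdisj'.mono_right (LinearMap.le_ker_iff_map.2 hbot)))
    rw [Set.mem_singleton_iff, ← annRS_map_of_disjoint _ hdisj',
      hL.annRS_eq (Submodule.map_le_iff_le_comap.2 hle) hne]
  · left
    have hne : L' ⊓ N ≠ ⊥ := hdisj ∘ disjoint_iff.2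
    exact ⟨L' ⊓ N, inf_le_right, hL'.of_le inf_le_left hne, hL'.annRS_eq inf_le_left hne⟩

theorem lt_comap_mkQ {N : Submodule S M} {L : Submodule S (M ⧸ N)} (hL : L ≠ ⊥) :
    N < L.comap N.mkQ := by
  conv_lhs => rw [← Submodule.ker_mkQ N]
  exact (Submodule.comap_lt_comap_iff_of_surjective N.mkQ_surjective).2 (bot_lt_iff_ne_bot.2 hL)

end

/-- If `R` is commutative noetherian, `S` is a left noetherian `R`-algebra and `M` is a
finitely generated `S`-module, then the set of associated primes of `M` is finite. -/
theorem rAss_finite_of_fg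
    (R S M : Type*) [CommRing R] [IsNoetherianRing R] [Ring S] [IsNoetherianRing S]
    [Algebra R S] [AddCommGroup M] [Module S M] (hfg : (⊤ : Submodule S M).FG) :
    (RAssOf R (⊤ : Submodule S M)).Finite := by
  have : Module.Finite S M := ⟨hfg⟩
  obtain ⟨N, hN, hmax⟩ := set_has_maximal_iff_noetherian.2 (inferInstance : IsNoetherian S M)
    {N | (RAssOf R N).Finite} ⟨⊥, by simp [rAssOf_bot]⟩
  obtain rfl | hNtop := eq_or_ne N ⊤
  · exact hN
  have : Nontrivial (M ⧸ N) := Submodule.Quotient.nontrivial_iff.2 hNtop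
  obtain ⟨L, -, hL⟩ := exists_isRElem_le (R := R) (top_ne_bot : (⊤ : Submodule S (M ⧸ N)) ≠ ⊥)
  have hfin : (RAssOf R (L.comap N.mkQ)).Finite :=
    (hN.union (Set.finite_singleton _)).subset (rAssOf_comap_mkQ_subset hL)
  exact (hmax _ hfin (lt_comap_mkQ hL.1)).elim
end

section
/- Let R be a commutative noetherian ring, S a left noetherian ring which is an R-algebra, and I, J ideals of R. If M is an (I,J)-torsion S-module, then the local cohomology H^i_{I,J}(M) vanishes for all i > 0, where H^i_{I,J} is the i-th right derived functor of the left-exact functor Γ_{I,J} on the category of S-modules. -/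
/-!
A torsion module has an injective resolution by torsion injectives: embed a torsion module `X`
into `Γ_{I,J}(E)` for an injective `E ⊇ X`, and use that quotients of torsion modules are
torsion. On torsion modules `Γ_{I,J}` is the identity, so applying it to this resolution returns
an exact complex, and the higher derived functors vanish.

The key point is that `Γ_{I,J}(E)` is injective when `E` is. Take `C ≤ E` maximal with
`C ∩ Γ(E) = 0`; then `E/C` is an essential extension of `Γ(E)`, and essential extensions of
torsion modules are torsion. Indeed, for `x ∈ E/C` and `r ∈ R` killing `T ∩ Sx`
(`T` the image of `Γ(E)`), Fitting's lemma on the noetherian module `Sx` gives `n` with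
`r^n Sx ∩ ker r^n = 0`, hence `r^n Sx ∩ T = 0` and so `r^n Sx = 0`. Thus
`Ann(T ∩ Sx) ⊆ √Ann(Sx)`, and since `I` is finitely generated the bound
`I^m ⊆ Ann(T ∩ Sx) + J` yields a bound `I^k ⊆ Ann(Sx) + J`. Finally an extension `E/C → E`
of the inclusion `Γ(E) ⊆ E` takes values in `Γ(E)`, so `Γ(E)` is a retract of `E`.
-/

open CategoryTheory

universe u

/-- `Γ_{I,J}` of a module. -/
def gammaIJ (R S : Type*) [CommRing R] [Ring S] [Algebra R S] (I J : Ideal R)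
    (M : Type*) [AddCommGroup M] [Module S M] : Submodule S M :=
  sSup {N : Submodule S M | N.FG ∧ ∃ n, 1 ≤ n ∧ I ^ n ≤ annRS R N ⊔ J}

/-- Any `S`-linear map carries `Γ_{I,J}` into `Γ_{I,J}`. -/
lemma gammaIJ_map_le {R S : Type*} [CommRing R] [Ring S] [Algebra R S] (I J : Ideal R)
    {M M' : Type*} [AddCommGroup M] [Module S M] [AddCommGroup M'] [Module S M']
    (f : M →ₗ[S] M') :
    Submodule.map f (gammaIJ R S I J M) ≤ gammaIJ R S I J M' := by
  rw [Submodule.map_le_iff_le_comap]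
  refine sSup_le ?_
  rintro N ⟨hfg, n, hn, hI⟩
  rw [← Submodule.map_le_iff_le_comap]
  refine le_sSup ⟨hfg.map f, n, hn, le_trans hI (sup_le_sup_right ?_ J)⟩
  rintro r hr
  rintro x ⟨y, hy, rfl⟩
  rw [← map_smul, hr y hy, map_zero]

/-- The left-exact `(I,J)`-torsion functor `Γ_{I,J}` on the category of `S`-modules. -/
noncomputable def gammaFunctor (R : Type*) (S : Type u) [CommRing R] [Ring S] [Algebra R S]
    (I J : Ideal R) : ModuleCat.{u} S ⥤ ModuleCat.{u} S where
  obj M := ModuleCat.of S ↥(gammaIJ R S I J M)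
  map {M M'} f :=
    ModuleCat.ofHom
      (LinearMap.restrict f.hom (fun x hx => gammaIJ_map_le I J f.hom ⟨x, hx, rfl⟩))
  map_id M := by ext x; rfl
  map_comp f g := by ext x; rfl

instance gammaFunctor_additive (R : Type*) (S : Type u) [CommRing R] [Ring S] [Algebra R S]
    (I J : Ideal R) : (gammaFunctor R S I J).Additive where
  map_add := by intros; ext x; rfl

namespace CategoryTheory

open Limits

variable {C : Type*} [Category C] [Abelian C]

lemma ShortComplex.Exact.epi_comp_comp_mono {S : ShortComplex C} (hS : S.Exact) {W V : C}
    {e : W ⟶ S.X₁} [Epi e] {m : S.X₃ ⟶ V} [Mono m] {f : W ⟶ S.X₂} {g : S.X₂ ⟶ V}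
    (hf : e ≫ S.f = f) (hg : S.g ≫ m = g) :
    (ShortComplex.mk f g (by simp [← hf, ← hg])).Exact := by
  subst hf hg
  let φ : ShortComplex.mk (e ≫ S.f) S.g (by simp) ⟶ S :=
    { τ₁ := e, τ₂ := 𝟙 _, τ₃ := 𝟙 _ }
  let ψ : ShortComplex.mk (e ≫ S.f) S.g (by simp) ⟶
      ShortComplex.mk (e ≫ S.f) (S.g ≫ m) (by simp) :=
    { τ₁ := 𝟙 _, τ₂ := 𝟙 _, τ₃ := m }
  exact (exact_iff_of_epi_of_isIso_of_mono ψ).1 ((exact_iff_of_epi_of_isIso_of_mono φ).2 hS)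

namespace InjectiveResolution

variable {P : ObjectProperty C} [P.IsClosedUnderQuotients]
  (ip : ∀ X : P.FullSubcategory, InjectivePresentation X.obj) (hip : ∀ X, P (ip X).J)
  {X : C} (hX : P X)

noncomputable def cosyzygy : ℕ → P.FullSubcategory
  | 0 => ⟨X, hX⟩
  | n + 1 => ⟨cokernel (ip (cosyzygy n)).f, P.prop_of_epi (cokernel.π _) (hip _)⟩

noncomputable def cosyzygyπ (n : ℕ) :
    (ip (cosyzygy ip hip hX n)).J ⟶ (cosyzygy ip hip hX (n + 1)).obj :=
  cokernel.π (ip (cosyzygy ip hip hX n)).f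

instance (n : ℕ) : Epi (cosyzygyπ ip hip hX n) :=
  (inferInstance : Epi (cokernel.π (ip (cosyzygy ip hip hX n)).f))

lemma f_cosyzygyπ (n : ℕ) : (ip (cosyzygy ip hip hX n)).f ≫ cosyzygyπ ip hip hX n = 0 :=
  cokernel.condition _

lemma exact_cosyzygyπ (n : ℕ) : (ShortComplex.mk _ _ (f_cosyzygyπ ip hip hX n)).Exact :=
  ShortComplex.exact_cokernel _

noncomputable def ofPresentationsCocomplex : CochainComplex C ℕ :=
  CochainComplex.of (fun n => (ip (cosyzygy ip hip hX n)).J)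
    (fun n => cosyzygyπ ip hip hX n ≫ (ip (cosyzygy ip hip hX (n + 1))).f)
    (fun n => by
      rw [Category.assoc, ← Category.assoc (ip _).f, f_cosyzygyπ, zero_comp, comp_zero])

lemma ofPresentationsCocomplex_d (n : ℕ) :
    (ofPresentationsCocomplex ip hip hX).d n (n + 1) =
      cosyzygyπ ip hip hX n ≫ (ip (cosyzygy ip hip hX (n + 1))).f := by
  simp [ofPresentationsCocomplex]

lemma ofPresentationsCocomplex_exactAt_succ (n : ℕ) :
    (ofPresentationsCocomplex ip hip hX).ExactAt (n + 1) := by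
  rw [HomologicalComplex.exactAt_iff' _ n (n + 1) (n + 1 + 1) (by simp) (by simp)]
  exact (exact_cosyzygyπ ip hip hX (n + 1)).epi_comp_comp_mono
    (ofPresentationsCocomplex_d ip hip hX n).symm
    (ofPresentationsCocomplex_d ip hip hX (n + 1)).symm

noncomputable def ofPresentationsι :
    (CochainComplex.single₀ C).obj X ⟶ ofPresentationsCocomplex ip hip hX :=
  (CochainComplex.fromSingle₀Equiv _ _).symm ⟨(ip (cosyzygy ip hip hX 0)).f, by
    rw [ofPresentationsCocomplex_d]
    exact (Category.assoc _ _ _).symm.trans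
      ((congrArg (· ≫ _) (f_cosyzygyπ ip hip hX 0)).trans zero_comp)⟩

lemma ofPresentationsι_f_zero :
    (ofPresentationsι ip hip hX).f 0 = (ip (cosyzygy ip hip hX 0)).f :=
  CochainComplex.fromSingle₀Equiv_symm_apply_f_zero _ _

noncomputable def ofPresentations : InjectiveResolution X where
  cocomplex := ofPresentationsCocomplex ip hip hX
  injective _ := (ip _).injective
  ι := ofPresentationsι ip hip hX
  quasiIso := ⟨fun n => by
    cases n with
    | zero =>
      rw [CochainComplex.quasiIsoAt₀_iff, ShortComplex.quasiIso_iff_of_zeros _ rfl rfl rfl]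
      refine ⟨(exact_cosyzygyπ ip hip hX 0).epi_comp_comp_mono (e := 𝟙 _)
        ((Category.id_comp _).trans (ofPresentationsι_f_zero ip hip hX).symm)
        (ofPresentationsCocomplex_d ip hip hX 0).symm, ?_⟩
      show Mono ((ofPresentationsι ip hip hX).f 0)
      rw [ofPresentationsι_f_zero]
      exact (ip _).mono
    | succ n =>
      rw [quasiIsoAt_iff_exactAt]
      · exact ofPresentationsCocomplex_exactAt_succ ip hip hX n
      · exact CochainComplex.exactAt_succ_single_obj _ _⟩

end InjectiveResolution

lemma NatTrans.isZero_rightDerived_succ_obj [EnoughInjectives C] {F : C ⥤ C} [F.Additive]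
    (ι : F ⟶ 𝟭 C) {X : C} (R : InjectiveResolution X)
    (hι : ∀ n, IsIso (ι.app (R.cocomplex.X n))) (n : ℕ) :
    IsZero ((F.rightDerived (n + 1)).obj X) := by
  have e : (F.mapHomologicalComplex _).obj R.cocomplex ≅ R.cocomplex :=
    HomologicalComplex.Hom.isoOfComponents (fun k => @asIso _ _ _ _ (ι.app _) (hι k))
      (fun _ _ _ => (ι.naturality _).symm)
  refine IsZero.of_iso ?_
    (R.isoRightDerivedObj F (n + 1) ≪≫ (HomologicalComplex.homologyFunctor _ _ _).mapIso e)
  exact (R.cocomplex.exactAt_iff_isZero_homology _).1 (R.cocomplex_exactAt_succ n)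

end CategoryTheory

namespace Ideal

variable {R : Type*} [CommRing R]

lemma sup_mul_sup_le_mul_sup (a b J : Ideal R) : (a ⊔ J) * (b ⊔ J) ≤ a * b ⊔ J := by
  rw [sup_mul, mul_sup, mul_sup]
  exact sup_le (sup_le le_sup_left (le_sup_of_le_right mul_le_right))
    (sup_le (le_sup_of_le_right mul_le_left) (le_sup_of_le_right mul_le_right))

lemma exists_pow_le_sup_of_le_radical {I J a b : Ideal R} (hI : I.FG) {m : ℕ}
    (hm : I ^ m ≤ a ⊔ J) (hab : a ≤ b.radical) : ∃ n, 1 ≤ n ∧ I ^ n ≤ b ⊔ J := by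
  have hJ : a ⊔ J ≤ (b ⊔ J).radical :=
    sup_le (hab.trans (radical_mono le_sup_left)) (le_sup_right.trans le_radical)
  have hIrad : I ≤ (b ⊔ J).radical :=
    fun x hx => radical_le_radical_iff.2 (hm.trans hJ) ⟨m, pow_mem_pow hx m⟩
  obtain ⟨k, hk⟩ := exists_pow_le_of_le_radical_of_fg hIrad hI
  exact ⟨k + 1, Nat.le_add_left 1 k, (pow_le_pow_right k.le_succ).trans hk⟩

end Ideal

lemma Submodule.exists_disjoint_forall_disjoint_map_mkQ_eq_bot {S P : Type*} [Ring S]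
    [AddCommGroup P] [Module S P] (T : Submodule S P) :
    ∃ C : Submodule S P, Disjoint C T ∧
      ∀ X : Submodule S (P ⧸ C), Disjoint X (T.map C.mkQ) → X = ⊥ := by
  obtain ⟨C, -, hC⟩ := zorn_le_nonempty₀ {C : Submodule S P | Disjoint C T}
    (fun c hc hchain _ _ => ⟨sSup c, hchain.directedOn.disjoint_sSup_left.2 hc,
      fun _ => le_sSup⟩) ⊥ disjoint_bot_left
  refine ⟨C, hC.prop, fun X hX => ?_⟩
  have hle : C ≤ X.comap C.mkQ := fun z hz => by
    rw [mem_comap, mkQ_apply, (Quotient.mk_eq_zero C).2 hz]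
    exact X.zero_mem
  have hdisj : Disjoint (X.comap C.mkQ) T := by
    refine disjoint_def.2 fun z hzX hzT => ?_
    have hz : C.mkQ z = 0 := disjoint_def.1 hX _ hzX ⟨z, hzT, rfl⟩
    exact disjoint_def.1 hC.prop z ((Quotient.mk_eq_zero C).1 hz) hzT
  rw [← map_comap_eq_of_surjective C.mkQ_surjective X, hC.eq_of_ge hdisj hle, mkQ_map_self]

section Annihilator

variable {R S M M' : Type*} [CommRing R] [Ring S] [Algebra R S]
  [AddCommGroup M] [Module S M] [AddCommGroup M'] [Module S M']

lemma annRS_antitone : Antitone (annRS R : Submodule S M → Ideal R) :=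
  fun _ _ h _ hr x hx => hr x (h hx)

lemma annRS_bot : annRS R (⊥ : Submodule S M) = ⊤ :=
  eq_top_iff.2 fun _ _ _ hx => by rw [(Submodule.mem_bot S).1 hx, smul_zero]

lemma annRS_sup (N N' : Submodule S M) : annRS R (N ⊔ N') = annRS R N ⊓ annRS R N' := by
  refine le_antisymm (le_inf (annRS_antitone le_sup_left) (annRS_antitone le_sup_right)) ?_
  rintro r ⟨hr, hr'⟩ _ hx
  obtain ⟨y, hy, z, hz, rfl⟩ := Submodule.mem_sup.1 hx
  rw [smul_add, hr y hy, hr' z hz, add_zero]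

lemma annRS_map_of_injective {f : M →ₗ[S] M'} (hf : Function.Injective f) (N : Submodule S M) :
    annRS R (N.map f) = annRS R N := by
  refine le_antisymm (fun r hr x hx => hf ?_) ?_
  · rw [map_smul, hr _ ⟨x, hx, rfl⟩, map_zero]
  · rintro r hr _ ⟨x, hx, rfl⟩
    rw [← map_smul, hr x hx, map_zero]

variable (S) in
def centralSMul (r : R) : Module.End S M where
  toFun x := algebraMap R S r • x
  map_add' := smul_add _
  map_smul' s x := by rw [RingHom.id_apply, smul_smul, Algebra.commutes, mul_smul]

lemma centralSMul_pow_apply (r : R) (k : ℕ) (x : M) :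
    (centralSMul S r ^ k) x = algebraMap R S (r ^ k) • x := by
  induction k with
  | zero => simp
  | succ k ih =>
    rw [pow_succ', Module.End.mul_apply, ih, pow_succ', map_mul, mul_smul]
    rfl

lemma annRS_inf_le_radical_annRS {T : Submodule S M}
    (hT : ∀ X : Submodule S M, Disjoint X T → X = ⊥) (N : Submodule S M) [IsNoetherian S N] :
    annRS R (T ⊓ N) ≤ (annRS R N).radical := by
  intro r hr
  let f : Module.End S N := centralSMul S r
  obtain ⟨n, hn, hdisj⟩ := ((Filter.eventually_ge_atTop 1).and
    (Module.End.eventually_disjoint_ker_pow_range_pow f)).exists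
  have hrange : Disjoint ((LinearMap.range (f ^ n)).map N.subtype) T := by
    refine Submodule.disjoint_def.2 ?_
    rintro _ ⟨_, ⟨y, rfl⟩, rfl⟩ hyT
    have hf : f ((f ^ n) y) = 0 := Subtype.ext (hr _ ⟨hyT, Submodule.coe_mem _⟩)
    have hker : (f ^ n) y ∈ LinearMap.ker (f ^ n) := by
      obtain ⟨k, rfl⟩ := Nat.exists_eq_add_of_le' hn
      rw [pow_succ] at hf ⊢
      rw [LinearMap.mem_ker, Module.End.mul_apply, hf, map_zero]
    simpa using Submodule.disjoint_def.1 hdisj _ hker ⟨y, rfl⟩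
  refine ⟨n, fun x hx => ?_⟩
  have hx' : ((f ^ n) ⟨x, hx⟩ : M) ∈ (LinearMap.range (f ^ n)).map N.subtype :=
    ⟨_, ⟨_, rfl⟩, rfl⟩
  rwa [hT _ hrange, Submodule.mem_bot, centralSMul_pow_apply] at hx'

end Annihilator

section Gamma

variable (R S : Type*) [CommRing R] [Ring S] [Algebra R S] (I J : Ideal R)
  (M : Type*) [AddCommGroup M] [Module S M]

def fgTorsionSubmodules : Set (Submodule S M) :=
  {N | N.FG ∧ ∃ n, 1 ≤ n ∧ I ^ n ≤ annRS R N ⊔ J}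

lemma bot_mem_fgTorsionSubmodules : ⊥ ∈ fgTorsionSubmodules R S I J M :=
  ⟨Submodule.fg_bot, 1, le_rfl, by rw [annRS_bot, top_sup_eq]; exact le_top⟩

lemma supClosed_fgTorsionSubmodules : SupClosed (fgTorsionSubmodules R S I J M) := by
  rintro N ⟨hN, n, hn, h⟩ N' ⟨hN', n', -, h'⟩
  refine ⟨hN.sup hN', n + n', le_add_right hn, ?_⟩
  calc I ^ (n + n') = I ^ n * I ^ n' := pow_add I n n'
    _ ≤ (annRS R N ⊔ J) * (annRS R N' ⊔ J) := Ideal.mul_mono h h'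
    _ ≤ annRS R N * annRS R N' ⊔ J := Ideal.sup_mul_sup_le_mul_sup _ _ _
    _ ≤ annRS R (N ⊔ N') ⊔ J := by rw [annRS_sup]; exact sup_le_sup_right Ideal.mul_le_inf J

variable {R S I J M}

lemma Submodule.FG.le_gammaIJ_iff {N : Submodule S M} (hN : N.FG) :
    N ≤ gammaIJ R S I J M ↔ ∃ n, 1 ≤ n ∧ I ^ n ≤ annRS R N ⊔ J := by
  refine ⟨fun h => ?_, fun ⟨n, hn, h⟩ => le_sSup ⟨hN, n, hn, h⟩⟩
  obtain ⟨K, ⟨-, n, hn, hK⟩, hNK⟩ :=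
    (CompleteLattice.isCompactElement_iff_le_of_directed_sSup_le (α := Submodule S M) N).1
      ((Submodule.fg_iff_compact N).1 hN) _ ⟨⊥, bot_mem_fgTorsionSubmodules R S I J M⟩
      (supClosed_fgTorsionSubmodules R S I J M).directedOn h
  exact ⟨n, hn, hK.trans (sup_le_sup_right (annRS_antitone hNK) J)⟩

lemma gammaIJ_eq_top_of_le {N : Submodule S M} (hN : N ≤ gammaIJ R S I J M) :
    gammaIJ R S I J ↥N = ⊤ := by
  refine eq_top_iff.2 fun y _ => (Submodule.fg_span_singleton y).le_gammaIJ_iff.2 ?_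
    (Submodule.mem_span_singleton_self y)
  have hy : Submodule.span S {(y : M)} ≤ gammaIJ R S I J M :=
    (Submodule.span_singleton_le_iff_mem _ _).2 (hN y.2)
  rw [← annRS_map_of_injective N.injective_subtype, Submodule.map_span, Set.image_singleton]
  exact (Submodule.fg_span_singleton _).le_gammaIJ_iff.1 hy

lemma gammaIJ_eq_top_of_surjective {M' : Type*} [AddCommGroup M'] [Module S M']
    {f : M →ₗ[S] M'} (hf : Function.Surjective f) (hM : gammaIJ R S I J M = ⊤) :
    gammaIJ R S I J M' = ⊤ := by
  rw [eq_top_iff, ← LinearMap.range_eq_top.2 hf, LinearMap.range_eq_map, ← hM]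
  exact gammaIJ_map_le I J f

variable [IsNoetherianRing R] [IsNoetherianRing S]

theorem gammaIJ_eq_top_of_essential {T : Submodule S M} (hT : T ≤ gammaIJ R S I J M)
    (hess : ∀ X : Submodule S M, Disjoint X T → X = ⊥) : gammaIJ R S I J M = ⊤ := by
  refine eq_top_iff.2 fun x _ => ?_
  let N := Submodule.span S {x}
  have hN : N.FG := Submodule.fg_span_singleton x
  have : IsNoetherian S N := isNoetherian_of_fg_of_noetherian N hN
  obtain ⟨m, -, hm⟩ :=
    (hN.of_le inf_le_right : (T ⊓ N).FG).le_gammaIJ_iff.1 (inf_le_left.trans hT)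
  exact hN.le_gammaIJ_iff.2
    (Ideal.exists_pow_le_sup_of_le_radical (IsNoetherian.noetherian I) hm
      (annRS_inf_le_radical_annRS hess N)) (Submodule.mem_span_singleton_self x)

end Gamma

theorem injective_gammaFunctor_obj {R : Type*} {S : Type u} [CommRing R] [IsNoetherianRing R]
    [Ring S] [IsNoetherianRing S] [Algebra R S] (I J : Ideal R) (E : ModuleCat.{u} S)
    [Injective E] : Injective ((gammaFunctor R S I J).obj E) := by
  let T := gammaIJ R S I J E
  obtain ⟨C, hCT, hess⟩ := T.exists_disjoint_forall_disjoint_map_mkQ_eq_bot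
  have hQ : gammaIJ R S I J (E ⧸ C) = ⊤ :=
    gammaIJ_eq_top_of_essential (gammaIJ_map_le I J C.mkQ) hess
  let j : ModuleCat.of S T ⟶ ModuleCat.of S (E ⧸ C) := ModuleCat.ofHom (C.mkQ ∘ₗ T.subtype)
  have : Mono j := by
    refine (ModuleCat.mono_iff_injective _).2 ((injective_iff_map_eq_zero _).2 fun t ht => ?_)
    exact Subtype.ext
      (Submodule.disjoint_def.1 hCT _ ((Submodule.Quotient.mk_eq_zero C).1 ht) t.2)
  let φ : ModuleCat.of S (E ⧸ C) ⟶ E := Injective.factorThru (ModuleCat.ofHom T.subtype) j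
  have hφ (y : E ⧸ C) : φ.hom y ∈ T :=
    gammaIJ_map_le I J φ.hom ⟨y, hQ ▸ Submodule.mem_top, rfl⟩
  exact Retract.injective
    { i := ModuleCat.ofHom T.subtype
      r := ModuleCat.ofHom (LinearMap.codRestrict T φ.hom hφ ∘ₗ C.mkQ)
      retract := by
        ext t
        exact Subtype.ext (LinearMap.congr_fun (congrArg ModuleCat.Hom.hom
          (Injective.comp_factorThru (ModuleCat.ofHom T.subtype) j)) t) }

section Torsion

variable (R : Type*) (S : Type u) [CommRing R] [Ring S] [Algebra R S] (I J : Ideal R)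

def isIJTorsion : ObjectProperty (ModuleCat.{u} S) := fun X => gammaIJ R S I J X = ⊤

instance : (isIJTorsion R S I J).IsClosedUnderQuotients where
  prop_of_epi f hf hX := gammaIJ_eq_top_of_surjective ((ModuleCat.epi_iff_surjective f).1 hf) hX

lemma isIJTorsion_gammaFunctor_obj (X : ModuleCat.{u} S) :
    isIJTorsion R S I J ((gammaFunctor R S I J).obj X) :=
  gammaIJ_eq_top_of_le le_rfl

def gammaι : gammaFunctor R S I J ⟶ 𝟭 (ModuleCat.{u} S) where
  app X := ModuleCat.ofHom (gammaIJ R S I J X).subtype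

variable {R S I J}

lemma isIso_gammaι_app {X : ModuleCat.{u} S} (hX : isIJTorsion R S I J X) :
    IsIso ((gammaι R S I J).app X) :=
  (ConcreteCategory.isIso_iff_bijective _).2
    ⟨Subtype.val_injective, fun x => ⟨⟨x, hX ▸ Submodule.mem_top⟩, rfl⟩⟩

noncomputable def torsionInjectivePresentation [IsNoetherianRing R] [IsNoetherianRing S]
    (X : (isIJTorsion R S I J).FullSubcategory) : InjectivePresentation X.obj where
  J := (gammaFunctor R S I J).obj (Injective.under X.obj)
  injective := injective_gammaFunctor_obj I J _
  f := ModuleCat.ofHom (LinearMap.codRestrict _ (Injective.ι X.obj).hom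
    fun x => gammaIJ_map_le I J _ ⟨x, X.property ▸ Submodule.mem_top, rfl⟩)
  mono := (ModuleCat.mono_iff_injective _).2 fun _ _ h =>
    (ModuleCat.mono_iff_injective (Injective.ι X.obj)).1 inferInstance (congrArg Subtype.val h)

end Torsion

/-- If `M` is an `(I,J)`-torsion `S`-module, then the local cohomology
`H^i_{I,J}(M) = (R^i Γ_{I,J})(M)` vanishes for all `i > 0`. -/
theorem rightDerived_gammaFunctor_isZero_of_torsion
    (R : Type*) (S : Type u) [CommRing R] [IsNoetherianRing R] [Ring S]
    [IsNoetherianRing S] [Algebra R S] (I J : Ideal R)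
    (M : Type u) [AddCommGroup M] [Module S M]
    (hM : gammaIJ R S I J M = ⊤) (i : ℕ) (hi : 0 < i) :
    Limits.IsZero (((gammaFunctor R S I J).rightDerived i).obj (ModuleCat.of S M)) := by
  obtain ⟨n, rfl⟩ : ∃ n, i = n + 1 := ⟨i - 1, by omega⟩
  let res := InjectiveResolution.ofPresentations torsionInjectivePresentation
    (fun X => isIJTorsion_gammaFunctor_obj R S I J (Injective.under X.obj))
    (X := ModuleCat.of S M) hM
  exact (gammaι R S I J).isZero_rightDerived_succ_obj res
    (fun _ => isIso_gammaι_app (isIJTorsion_gammaFunctor_obj R S I J _)) n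
end
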